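/- Let constants a ∈ ℝ, b ≠ 0, K ∈ ℝ, T > 0 be given. Define for x ≤ K and t < T: γ(x,t) = (1/2)·erfc( (K − x − a(T−t)) / (|b|√(2(T−t))) ) + (1/2)·exp( 2a(K−x)/b² )·erfc( (K − x + a(T−t)) / (|b|√(2(T−t))) ). Then γ satisfies the backward PDE ∂γ/∂t = −a ∂γ/∂x − (b²/2) ∂²γ/∂x² on (−∞,K)×(0,T), with γ(K,t) = 1 for t ≤ T, γ(x,t) → 0 as x → −∞, and γ(x,t) → 0 as t → T for each fixed x < K. -/

import Mathlib

/-!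
Each `erfc` term of `γ` depends on `(x, t)` only through a similarity variable
`z = (K - x ∓ a τ) / (|b| √(2τ))`, `τ = T - t`, and solves the backward equation with drift `±a`
because `erfc'' z = -2 z erfc' z`. The factor `exp (2a(K - x)/b²)` is a Doob `h`-transform: since
`exp (-2ax/b²)` is annihilated by the generator, it turns a solution with drift `-a` into one with
drift `a`. At `x = K` the two terms are `erfc z + erfc (-z) = 2`. As `x → -∞` or `t → T⁻` both
similarity variables tend to `+∞`; the reflected term is controlled by the Gaussian tail bound
`erfc z ≤ exp (-z²)` together with `2a(K - x)/b² - z₊² = -z₋²`.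
-/

open Filter

/-- The complementary error function `erfc z = (2/√π) ∫_z^∞ e^{-s²} ds`. -/
noncomputable def erfc (z : ℝ) : ℝ :=
  (2 / Real.sqrt Real.pi) * ∫ s in Set.Ioi z, Real.exp (-s^2)

open MeasureTheory Set Real Topology

theorem hasDerivAt_integral_Ioi {E : Type*} [NormedAddCommGroup E] [NormedSpace ℝ E]
    [CompleteSpace E] {f : ℝ → E} (hf : Integrable f) (hc : Continuous f) (z : ℝ) :
    HasDerivAt (fun z => ∫ s in Ioi z, f s) (-f z) z := by
  have hftc : HasDerivAt (fun z => ∫ s in (0 : ℝ)..z, f s) (f z) z :=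
    intervalIntegral.integral_hasDerivAt_right hf.intervalIntegrable
      hc.aestronglyMeasurable.stronglyMeasurableAtFilter hc.continuousAt
  refine (hftc.const_sub (∫ s in Ioi 0, f s)).congr_of_eventuallyEq (.of_forall fun y => ?_)
  show ∫ s in Ioi y, f s = (∫ s in Ioi 0, f s) - ∫ s in (0 : ℝ)..y, f s
  rw [← intervalIntegral.integral_Ioi_sub_Ioi' hf.integrableOn hf.integrableOn, sub_sub_cancel]

theorem integrable_exp_neg_sq : Integrable (fun s : ℝ => exp (-s ^ 2)) := by
  simpa using integrable_exp_neg_mul_sq one_pos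

theorem hasDerivAt_erfc (z : ℝ) : HasDerivAt erfc (-(2 / √π * exp (-z ^ 2))) z := by
  have := (hasDerivAt_integral_Ioi integrable_exp_neg_sq (by fun_prop) z).const_mul (2 / √π)
  exact this.congr_deriv (mul_neg _ _)

theorem HasDerivAt.erfc {f : ℝ → ℝ} {f' x : ℝ} (hf : HasDerivAt f f' x) :
    HasDerivAt (fun y => erfc (f y)) (-(2 / √π * Real.exp (-f x ^ 2)) * f') x :=
  (hasDerivAt_erfc (f x)).comp x hf

theorem erfc_nonneg (z : ℝ) : 0 ≤ erfc z :=
  mul_nonneg (by positivity) (setIntegral_nonneg measurableSet_Ioi fun _ _ => (exp_pos _).le)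

theorem erfc_add_erfc_neg (z : ℝ) : erfc z + erfc (-z) = 2 := by
  have hneg : ∫ s in Ioi (-z), exp (-s ^ 2) = ∫ s in Iic z, exp (-s ^ 2) := by
    have := integral_comp_neg_Iic z fun s => exp (-s ^ 2)
    simp only [neg_sq] at this
    exact this.symm
  have hsplit := intervalIntegral.integral_Iic_add_Ioi (b := z)
    integrable_exp_neg_sq.integrableOn integrable_exp_neg_sq.integrableOn
  have htotal : ∫ s, exp (-s ^ 2) = √π := by simpa using integral_gaussian 1
  rw [erfc, erfc, hneg, ← mul_add, add_comm, hsplit, htotal]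
  field_simp [(sqrt_pos.2 pi_pos).ne']

theorem integral_Ioi_mul_exp_neg_sq (z : ℝ) :
    ∫ s in Ioi z, s * exp (-s ^ 2) = exp (-z ^ 2) / 2 := by
  have hderiv (s : ℝ) : HasDerivAt (fun s => -exp (-s ^ 2) / 2) (s * exp (-s ^ 2)) s := by
    refine (hasDerivAt_pow 2 s).fun_neg.exp.fun_neg.div_const 2 |>.congr_deriv ?_
    push_cast
    ring
  have hlim : Tendsto (fun s : ℝ => -exp (-s ^ 2) / 2) atTop (𝓝 0) := by
    simpa using ((tendsto_exp_atBot.comp (tendsto_neg_atTop_atBot.comp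
      (tendsto_pow_atTop two_ne_zero))).neg.div_const 2)
  rw [integral_Ioi_of_hasDerivAt_of_tendsto' (fun s _ => hderiv s)
    (by simpa using (integrable_mul_exp_neg_mul_sq one_pos).integrableOn) hlim]
  ring

theorem erfc_le_exp_neg_sq {z : ℝ} (hz : 1 ≤ z) : erfc z ≤ exp (-z ^ 2) := by
  have htail : ∫ s in Ioi z, exp (-s ^ 2) ≤ exp (-z ^ 2) / 2 := by
    rw [← integral_Ioi_mul_exp_neg_sq]
    refine setIntegral_mono_on integrable_exp_neg_sq.integrableOn
      (by simpa using (integrable_mul_exp_neg_mul_sq one_pos).integrableOn) measurableSet_Ioi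
      fun s hs => le_mul_of_one_le_left (exp_pos _).le (hz.trans (le_of_lt hs))
  have hpi : 1 ≤ √π := one_le_sqrt.2 (by linarith [pi_gt_three])
  calc erfc z ≤ 2 / √π * (exp (-z ^ 2) / 2) := by unfold erfc; gcongr
    _ = exp (-z ^ 2) / √π := by ring
    _ ≤ exp (-z ^ 2) := div_le_self (exp_pos _).le hpi

theorem tendsto_erfc_atTop : Tendsto erfc atTop (𝓝 0) := by
  have hgauss : Tendsto (fun z : ℝ => exp (-z ^ 2)) atTop (𝓝 0) :=
    tendsto_exp_atBot.comp (tendsto_neg_atTop_atBot.comp (tendsto_pow_atTop two_ne_zero))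
  exact tendsto_of_tendsto_of_tendsto_of_le_of_le' tendsto_const_nhds hgauss
    (.of_forall erfc_nonneg) ((eventually_ge_atTop 1).mono fun _ => erfc_le_exp_neg_sq)

def SolvesBackwardKolmogorovAt (a σ : ℝ) (u : ℝ → ℝ → ℝ) (x t : ℝ) : Prop :=
  ∃ uₜ uₓₓ : ℝ, ∃ uₓ : ℝ → ℝ, HasDerivAt (fun s => u x s) uₜ t ∧
    (∀ y, HasDerivAt (fun y => u y t) (uₓ y) y) ∧ HasDerivAt uₓ uₓₓ x ∧
    uₜ = -a * uₓ x - σ ^ 2 / 2 * uₓₓ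

namespace SolvesBackwardKolmogorovAt

variable {a σ x t : ℝ} {u v : ℝ → ℝ → ℝ}

theorem deriv_eq (h : SolvesBackwardKolmogorovAt a σ u x t) :
    deriv (fun s => u x s) t =
      -a * deriv (fun y => u y t) x - σ ^ 2 / 2 * deriv (deriv (fun y => u y t)) x := by
  obtain ⟨uₜ, uₓₓ, uₓ, ht, hx, hxx, heq⟩ := h
  rw [ht.deriv, (hx x).deriv, show deriv (fun y => u y t) = uₓ from funext fun y => (hx y).deriv,
    hxx.deriv, heq]

theorem add (hu : SolvesBackwardKolmogorovAt a σ u x t)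
    (hv : SolvesBackwardKolmogorovAt a σ v x t) :
    SolvesBackwardKolmogorovAt a σ (fun y s => u y s + v y s) x t := by
  obtain ⟨uₜ, uₓₓ, uₓ, hut, hux, huxx, hu⟩ := hu
  obtain ⟨vₜ, vₓₓ, vₓ, hvt, hvx, hvxx, hv⟩ := hv
  exact ⟨uₜ + vₜ, uₓₓ + vₓₓ, fun y => uₓ y + vₓ y, hut.add hvt, fun y => (hux y).add (hvx y),
    huxx.add hvxx, by rw [hu, hv]; ring⟩

theorem const_mul (c : ℝ) (hu : SolvesBackwardKolmogorovAt a σ u x t) :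
    SolvesBackwardKolmogorovAt a σ (fun y s => c * u y s) x t := by
  obtain ⟨uₜ, uₓₓ, uₓ, hut, hux, huxx, hu⟩ := hu
  exact ⟨c * uₜ, c * uₓₓ, fun y => c * uₓ y, hut.const_mul c, fun y => (hux y).const_mul c,
    huxx.const_mul c, by rw [hu]; ring⟩

theorem exp_mul (K : ℝ) (hσ : σ ≠ 0) (hv : SolvesBackwardKolmogorovAt (-a) σ v x t) :
    SolvesBackwardKolmogorovAt a σ (fun y s => exp (2 * a * (K - y) / σ ^ 2) * v y s) x t := by
  obtain ⟨vₜ, vₓₓ, vₓ, hvt, hvx, hvxx, hv⟩ := hv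
  set E := fun y => exp (2 * a * (K - y) / σ ^ 2)
  obtain ⟨k, hk⟩ : ∃ k, k = -(2 * a / σ ^ 2) := ⟨_, rfl⟩
  have hE (y : ℝ) : HasDerivAt E (k * E y) y := by
    refine (((hasDerivAt_id y).const_sub K).const_mul (2 * a) |>.div_const (σ ^ 2)).exp
      |>.congr_deriv ?_
    simp only [E, hk, id]
    ring
  refine ⟨E x * vₜ, k * (k * E x * v x t + E x * vₓ x) + (k * E x * vₓ x + E x * vₓₓ),
    fun y => k * E y * v y t + E y * vₓ y, hvt.const_mul (E x),
    fun y => ((hE y).mul (hvx y)).congr_deriv (by ring), ?_, ?_⟩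
  · exact (((hE x).const_mul k).mul (hvx x)).add ((hE x).mul hvxx) |>.congr_deriv (by ring)
  · rw [hv, hk]
    field_simp
    ring

end SolvesBackwardKolmogorovAt

theorem solvesBackwardKolmogorovAt_erfc (c K T : ℝ) {σ x t : ℝ} (hσ : σ ≠ 0) (ht : t < T) :
    SolvesBackwardKolmogorovAt c σ
      (fun y s => erfc ((K - y - c * (T - s)) / (|σ| * √(2 * (T - s))))) x t := by
  have hτ : 0 < 2 * (T - t) := by linarith
  have hβ : 0 < |σ| := abs_pos.2 hσ
  have hr : |σ| * √(2 * (T - t)) ≠ 0 := by positivity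
  have hz (y : ℝ) := ((hasDerivAt_id y).const_sub K |>.sub_const (c * (T - t))).div_const
    (|σ| * √(2 * (T - t)))
  have hN := (((hasDerivAt_id t).const_sub T).const_mul c).const_sub (K - x)
  have hD := (((hasDerivAt_id t).const_sub T).const_mul 2).sqrt hτ.ne' |>.const_mul |σ|
  refine ⟨_, _, _, (hN.div hD hr).erfc, fun y => (hz y).erfc,
    ((hz x).pow 2).fun_neg.exp.const_mul (2 / √π) |>.fun_neg.mul_const _, ?_⟩
  simp only [id, Pi.div_apply, Pi.pow_apply, Nat.cast_ofNat, Nat.reduceSub, pow_one]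
  have hρ := sq_sqrt hτ.le
  have hρ0 : 0 < √(2 * (T - t)) := sqrt_pos.2 hτ
  rw [← sq_abs σ]
  -- with `ρ = √(2 (T - t))` the identity becomes rational in `ρ`
  generalize |σ| = β at *
  generalize √(2 * (T - t)) = ρ at *
  rw [show T - t = ρ ^ 2 / 2 by linarith]
  have hρne := hρ0.ne'
  have hβne := hβ.ne'
  field_simp
  ring

noncomputable def hittingProb (a b K T x t : ℝ) : ℝ :=
  1 / 2 * erfc ((K - x - a * (T - t)) / (|b| * √(2 * (T - t))))
    + 1 / 2 * exp (2 * a * (K - x) / b ^ 2) *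
      erfc ((K - x + a * (T - t)) / (|b| * √(2 * (T - t))))

section HittingProb

variable {a b K T x t : ℝ}

theorem solvesBackwardKolmogorovAt_hittingProb (hb : b ≠ 0) (ht : t < T) :
    SolvesBackwardKolmogorovAt a b (hittingProb a b K T) x t := by
  have hdown := (solvesBackwardKolmogorovAt_erfc a K T (x := x) hb ht).const_mul (1 / 2)
  have hup :=
    ((solvesBackwardKolmogorovAt_erfc (-a) K T (x := x) hb ht).exp_mul K hb).const_mul (1 / 2)
  convert hdown.add hup using 1
  funext y s
  simp only [hittingProb, neg_mul, sub_neg_eq_add]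
  ring

theorem hittingProb_self : hittingProb a b K T K t = 1 := by
  have h := erfc_add_erfc_neg ((K - K + a * (T - t)) / (|b| * √(2 * (T - t))))
  simp only [hittingProb, sub_self, zero_sub, zero_add, neg_div, mul_zero, zero_div,
    exp_zero] at h ⊢
  linarith

theorem hittingProb_reflection_exponent (hb : b ≠ 0) {τ : ℝ} (hτ : 0 < τ) (N : ℝ) :
    2 * a * N / b ^ 2 - ((N + a * τ) / (|b| * √(2 * τ))) ^ 2 =
      -((N - a * τ) / (|b| * √(2 * τ))) ^ 2 := by
  rw [div_pow, div_pow, mul_pow, sq_abs, sq_sqrt (by positivity)]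
  field_simp
  ring

theorem tendsto_hittingProb_atBot (hb : b ≠ 0) (ht : t < T) :
    Tendsto (fun x => hittingProb a b K T x t) atBot (𝓝 0) := by
  set r := |b| * √(2 * (T - t)) with hr_def
  have hr : 0 < r := by have := sqrt_pos.2 (by linarith : 0 < 2 * (T - t)); positivity
  have hz (e : ℝ) : Tendsto (fun x => (K - x + e) / r) atBot atTop :=
    tendsto_atBot_atTop.2 fun B => ⟨K + e - r * B, fun x hx => by rw [le_div_iff₀ hr]; linarith⟩
  have hdown : Tendsto (fun x => (K - x - a * (T - t)) / r) atBot atTop := by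
    simpa only [← sub_eq_add_neg] using hz (-(a * (T - t)))
  have hup := hz (a * (T - t))
  have hgauss : Tendsto (fun x => exp (-((K - x - a * (T - t)) / r) ^ 2)) atBot (𝓝 0) :=
    (tendsto_exp_atBot.comp (tendsto_neg_atTop_atBot.comp (tendsto_pow_atTop two_ne_zero))).comp
      hdown
  have hreflected : Tendsto (fun x => exp (2 * a * (K - x) / b ^ 2) *
      erfc ((K - x + a * (T - t)) / r)) atBot (𝓝 0) := by
    refine tendsto_of_tendsto_of_tendsto_of_le_of_le' tendsto_const_nhds hgauss
      (.of_forall fun x => mul_nonneg (exp_pos _).le (erfc_nonneg _)) ?_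
    filter_upwards [hup.eventually_ge_atTop 1] with x hx
    calc exp (2 * a * (K - x) / b ^ 2) * erfc ((K - x + a * (T - t)) / r)
        ≤ exp (2 * a * (K - x) / b ^ 2) * exp (-((K - x + a * (T - t)) / r) ^ 2) := by
          gcongr; exact erfc_le_exp_neg_sq hx
      _ = exp (-((K - x - a * (T - t)) / r) ^ 2) := by
          rw [← exp_add, ← sub_eq_add_neg, hittingProb_reflection_exponent hb (by linarith)]
  have hsum :=
    ((tendsto_erfc_atTop.comp hdown).const_mul (1 / 2)).add (hreflected.const_mul (1 / 2))
  simp only [mul_zero, add_zero] at hsum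
  refine hsum.congr fun x => ?_
  rw [hittingProb, ← hr_def, Function.comp_apply]
  ring

theorem tendsto_erfc_div_sqrt_nhdsLT (hb : b ≠ 0) {f : ℝ → ℝ} {L : ℝ} (hL : 0 < L)
    (hf : Tendsto f (𝓝[<] T) (𝓝 L)) :
    Tendsto (fun t => erfc (f t / (|b| * √(2 * (T - t))))) (𝓝[<] T) (𝓝 0) := by
  have hscale : Tendsto (fun t => |b| * √(2 * (T - t))) (𝓝[<] T) (𝓝[>] 0) := by
    refine tendsto_nhdsWithin_iff.2 ⟨?_, ?_⟩
    · have : Continuous fun t => |b| * √(2 * (T - t)) := by fun_prop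
      simpa using (this.tendsto T).mono_left nhdsWithin_le_nhds
    · filter_upwards [self_mem_nhdsWithin] with t (ht : t < T)
      have := sqrt_pos.2 (by linarith : 0 < 2 * (T - t))
      exact mul_pos (abs_pos.2 hb) this
  exact tendsto_erfc_atTop.comp (hf.pos_mul_atTop hL (tendsto_inv_nhdsGT_zero.comp hscale))

theorem tendsto_hittingProb_nhdsLT (hb : b ≠ 0) (hx : x < K) :
    Tendsto (fun t => hittingProb a b K T x t) (𝓝[<] T) (𝓝 0) := by
  have hnum (c : ℝ) : Tendsto (fun t => K - x + c * (T - t)) (𝓝[<] T) (𝓝 (K - x)) := by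
    have : Continuous fun t => K - x + c * (T - t) := by fun_prop
    simpa using (this.tendsto T).mono_left nhdsWithin_le_nhds
  have hdown := tendsto_erfc_div_sqrt_nhdsLT hb (sub_pos.2 hx) (hnum (-a))
  have hup := tendsto_erfc_div_sqrt_nhdsLT hb (sub_pos.2 hx) (hnum a)
  simp only [neg_mul, ← sub_eq_add_neg] at hdown
  have hsum :=
    (hdown.const_mul (1 / 2)).add (hup.const_mul (1 / 2 * exp (2 * a * (K - x) / b ^ 2)))
  simp only [mul_zero, add_zero] at hsum
  exact hsum

end HittingProb

theorem frozen_coefficient_kbe_solution_general (a b K T : ℝ) (hb : b ≠ 0)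
    (γ : ℝ → ℝ → ℝ)
    (hγ : ∀ x t, γ x t =
      (1/2) * erfc ((K - x - a * (T - t)) / (|b| * Real.sqrt (2 * (T - t))))
      + (1/2) * Real.exp (2 * a * (K - x) / b^2) *
          erfc ((K - x + a * (T - t)) / (|b| * Real.sqrt (2 * (T - t))))) :
    (∀ x < K, ∀ t ∈ Set.Ioo 0 T,
      deriv (fun s => γ x s) t
        = -a * deriv (fun y => γ y t) x - (b^2 / 2) * deriv (deriv (fun y => γ y t)) x) ∧
    (∀ t ≤ T, γ K t = 1) ∧
    (∀ t < T, Tendsto (fun x => γ x t) atBot (nhds 0)) ∧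
    (∀ x < K, Tendsto (fun t => γ x t) (nhdsWithin T (Set.Iio T)) (nhds 0)) := by
  obtain rfl : γ = hittingProb a b K T := funext fun x => funext (hγ x)
  exact ⟨fun x _ t ht => (solvesBackwardKolmogorovAt_hittingProb hb ht.2).deriv_eq,
    fun t _ => hittingProb_self, fun t ht => tendsto_hittingProb_atBot hb ht,
    fun x hx => tendsto_hittingProb_nhdsLT hb hx⟩

/-- Closed-form solution of the constant-coefficient Kolmogorov backward equation with
absorbing boundary at `K`: the hitting probability of a drifted Brownian motion. -/
theorem frozen_coefficient_kbe_solution (a b K T : ℝ) (hb : b ≠ 0) (hT : 0 < T)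
    (γ : ℝ → ℝ → ℝ)
    (hγ : ∀ x t, γ x t =
      (1/2) * erfc ((K - x - a * (T - t)) / (|b| * Real.sqrt (2 * (T - t))))
      + (1/2) * Real.exp (2 * a * (K - x) / b^2) *
          erfc ((K - x + a * (T - t)) / (|b| * Real.sqrt (2 * (T - t))))) :
    (∀ x < K, ∀ t ∈ Set.Ioo 0 T,
      deriv (fun s => γ x s) t
        = -a * deriv (fun y => γ y t) x - (b^2 / 2) * deriv (deriv (fun y => γ y t)) x) ∧
    (∀ t ≤ T, γ K t = 1) ∧
    (∀ t < T, Tendsto (fun x => γ x t) atBot (nhds 0)) ∧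
    (∀ x < K, Tendsto (fun t => γ x t) (nhdsWithin T (Set.Iio T)) (nhds 0)) :=
  frozen_coefficient_kbe_solution_general a b K T hb γ hγ
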